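/- arXiv:1009.5148 — 3 statements merged into one kernel-verified Lean document; each statement's English description precedes it below -/
import Mathlib

section
/- Let k be a field of characteristic ≠ 2, Γ a group, and σ₀ : Γ → Γ a group automorphism with σ₀ ∘ σ₀ = id; let σ be the induced k-algebra automorphism of the group algebra k[Γ] (σ(e_g) = e_{σ₀(g)}). If the standard comultiplication Δ of k[Γ] (determined by Δ(e_g) = e_g ⊗ e_g) is multiplicative for the σ-super product, i.e. Δ(uv) = Δ(u) ·_σ Δ(v) for all u, v ∈ k[Γ], then σ₀ = id (equivalently, σ₀(g) = g for every g ∈ Γ). In other words, a group algebra admits no Hopf superalgebra structure with nontrivial grading induced by a group involution. -/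
/-!
For `e = e_g`, both `e` and `e * e = e_{g²}` are grouplike, so multiplicativity of `Δ` on
`e * e` leaves only the correction term of the super product:
`e (e - σ e) ⊗ (e - σ e) e = 0`. Over a field a pure tensor vanishes only if a factor does,
and `e` is a unit of `k[Γ]`, so `e = σ e`, i.e. `g = σ₀ g`.
-/

open TensorProduct

theorem TensorProduct.tmul_ne_zero {K V W : Type*} [Field K] [AddCommGroup V] [Module K V]
    [AddCommGroup W] [Module K W] {v : V} {w : W} (hv : v ≠ 0) (hw : w ≠ 0) :
    v ⊗ₜ[K] w ≠ 0 := by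
  obtain ⟨φ, hφ⟩ := Module.Projective.exists_dual_ne_zero K hv
  obtain ⟨ψ, hψ⟩ := Module.Projective.exists_dual_ne_zero K hw
  intro h
  have := congrArg (TensorProduct.lid K K ∘ TensorProduct.map φ ψ) h
  simp only [Function.comp_apply, map_tmul, lid_tmul, map_zero, smul_eq_mul] at this
  exact mul_ne_zero hφ hψ this

section SuperProduct

variable {k A : Type*} [Field k] [Ring A] [Algebra k A]

def superMul (σ : A →ₐ[k] A) (p q : A ⊗[k] A) : A ⊗[k] A :=
  p * q - (2 : k)⁻¹ • (map LinearMap.id (LinearMap.id - σ.toLinearMap) p *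
    map (LinearMap.id - σ.toLinearMap) LinearMap.id q)

theorem superMul_tmul_tmul (σ : A →ₐ[k] A) (a b c d : A) :
    superMul σ (a ⊗ₜ b) (c ⊗ₜ d)
      = (a * c) ⊗ₜ (b * d) - (2 : k)⁻¹ • ((a * (c - σ c)) ⊗ₜ ((b - σ b) * d)) := by
  simp only [superMul, map_tmul, LinearMap.id_apply, LinearMap.sub_apply,
    AlgHom.toLinearMap_apply, Algebra.TensorProduct.tmul_mul_tmul]

theorem superMul_tmul_self_eq_iff (σ : A →ₐ[k] A) (h2 : (2 : k) ≠ 0) (x : A) :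
    superMul σ (x ⊗ₜ x) (x ⊗ₜ x) = (x * x) ⊗ₜ[k] (x * x) ↔
      (x * (x - σ x)) ⊗ₜ[k] ((x - σ x) * x) = 0 := by
  rw [superMul_tmul_tmul, sub_eq_self, smul_eq_zero, or_iff_right (inv_ne_zero h2)]

end SuperProduct

theorem group_algebra_no_nontrivial_super_structure_general {k : Type*} [Field k]
    (hchar : (2 : k) ≠ 0) {Γ : Type*} [Group Γ]
    (σ₀ : Γ →* Γ)
    (σ : MonoidAlgebra k Γ →ₐ[k] MonoidAlgebra k Γ)
    (hσ : ∀ g : Γ, σ (MonoidAlgebra.single g (1 : k)) = MonoidAlgebra.single (σ₀ g) 1)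
    (Δ : MonoidAlgebra k Γ →ₗ[k] MonoidAlgebra k Γ ⊗[k] MonoidAlgebra k Γ)
    (hΔ : ∀ g : Γ, Δ (MonoidAlgebra.single g (1 : k))
      = MonoidAlgebra.single g (1 : k) ⊗ₜ[k] MonoidAlgebra.single g (1 : k))
    (hmul : ∀ u v : MonoidAlgebra k Γ,
      Δ (u * v) = Δ u * Δ v - (2 : k)⁻¹ •
        ((TensorProduct.map LinearMap.id (LinearMap.id - σ.toLinearMap)) (Δ u) *
          (TensorProduct.map (LinearMap.id - σ.toLinearMap) LinearMap.id) (Δ v))) :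
    ∀ g : Γ, σ₀ g = g := by
  intro g
  by_contra hg
  set e : MonoidAlgebra k Γ := MonoidAlgebra.single g 1
  have he : IsUnit e := (Group.isUnit g).map (MonoidAlgebra.of k Γ)
  have hΔe : Δ e = e ⊗ₜ e := hΔ g
  have hee : e * e = MonoidAlgebra.single (g * g) 1 := by
    rw [MonoidAlgebra.single_mul_single, one_mul]
  have hsq : superMul σ (e ⊗ₜ e) (e ⊗ₜ e) = (e * e) ⊗ₜ[k] (e * e) :=
    calc superMul σ (e ⊗ₜ e) (e ⊗ₜ e) = Δ (e * e) := by rw [← hΔe]; exact (hmul e e).symm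
      _ = (e * e) ⊗ₜ[k] (e * e) := by rw [hee, hΔ]
  have hd : e - σ e ≠ 0 := by
    rw [hσ, sub_ne_zero, Ne, MonoidAlgebra.single_left_inj one_ne_zero]
    exact Ne.symm hg
  exact tmul_ne_zero (mt he.mul_right_eq_zero.1 hd) (mt he.mul_left_eq_zero.1 hd)
    ((superMul_tmul_self_eq_iff σ hchar e).1 hsq)

/-- Let `k` be a field with `char k ≠ 2`, `Γ` a group and `σ₀` an
involutive group endomorphism of `Γ`; let `σ` be the induced algebra
automorphism of the group algebra `k[Γ]` (`σ(e_g) = e_{σ₀ g}`) and `Δ` the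
standard comultiplication (`Δ(e_g) = e_g ⊗ e_g`).  If `Δ` is multiplicative for
the `σ`-super product on `k[Γ] ⊗ k[Γ]`, i.e.
`Δ(uv) = Δ(u)Δ(v) − (1/2)·(id ⊗ (id−σ))(Δu) · ((id−σ) ⊗ id)(Δv)`,
then `σ₀ = id`: a group algebra admits no Hopf superalgebra structure with
nontrivial grading induced by a group involution. -/
theorem group_algebra_no_nontrivial_super_structure {k : Type*} [Field k]
    (hchar : (2 : k) ≠ 0) {Γ : Type*} [Group Γ]
    (σ₀ : Γ →* Γ) (hσ₀ : ∀ g, σ₀ (σ₀ g) = g)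
    (σ : MonoidAlgebra k Γ →ₐ[k] MonoidAlgebra k Γ)
    (hσ : ∀ g : Γ, σ (MonoidAlgebra.single g (1 : k)) = MonoidAlgebra.single (σ₀ g) 1)
    (Δ : MonoidAlgebra k Γ →ₗ[k] MonoidAlgebra k Γ ⊗[k] MonoidAlgebra k Γ)
    (hΔ : ∀ g : Γ, Δ (MonoidAlgebra.single g (1 : k))
      = MonoidAlgebra.single g (1 : k) ⊗ₜ[k] MonoidAlgebra.single g (1 : k))
    (hmul : ∀ u v : MonoidAlgebra k Γ,
      Δ (u * v) = Δ u * Δ v - (2 : k)⁻¹ •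
        ((TensorProduct.map LinearMap.id (LinearMap.id - σ.toLinearMap)) (Δ u) *
          (TensorProduct.map (LinearMap.id - σ.toLinearMap) LinearMap.id) (Δ v))) :
    ∀ g : Γ, σ₀ g = g :=
  group_algebra_no_nontrivial_super_structure_general hchar σ₀ σ hσ Δ hΔ hmul
end

section
/- Let G be an abelian group (written multiplicatively) and χ : ℤ^θ × ℤ^θ → G a bi-multiplicative map. Let f₁,…,f_θ ∈ ℤ^θ, fix an index i, and let c_l ∈ ℤ for l ≠ i satisfy χ(f_i, f_i)^{c_l} = χ(f_i, f_l) χ(f_l, f_i) for all l ≠ i (vertex i is of Cartan type). Set g_i := −f_i and g_l := f_l − c_l f_i for l ≠ i. Then: (i) χ(g_i, g_i) = χ(f_i, f_i), χ(g_i, g_l) = χ(f_l, f_i) and χ(g_l, g_i) = χ(f_i, f_l) for all l ≠ i; (ii) χ(g_l, g_l) = χ(f_l, f_l) for all l; (iii) χ(g_l, g_m) χ(g_m, g_l) = χ(f_l, f_m) χ(f_m, f_l) for all l, m. Consequently the matrices (χ(f_l, f_m)) and (χ(g_l, g_m)) are twist-equivalent, i.e. they have the same generalized Dynkin diagram. 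-/
/-! In additive notation `χ` is a biadditive form `B`, and the Cartan condition at `i` reads
`c l • B u u = B u x + B x u` with `u = f i`, `x = f l`. Replacing `c i` by `2` (the Cartan
integer `a_ii`) makes it hold at `l = i` too, and then `g l = f l - c l • f i` for every `l`.
Expanding `B (x - a • u) (y - b • u)` and its transpose, the correction terms
`a • (B u y + B y u)` and `b • (B u x + B x u)` both become `a * b • B u u` and cancel against
`2 * a * b • B u u`; the diagonal case is analogous. -/

section Biadditive

variable {M N : Type*} [AddCommGroup M] [AddCommGroup N] (B : M →+ M →+ N) {u x y : M} {a b : ℤ}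

theorem AddMonoidHom.map_neg_sub_zsmul (ha : a • B u u = B u x + B x u) :
    B (-u) (x - a • u) = B x u := by
  simp only [map_neg, map_sub, map_zsmul, AddMonoidHom.neg_apply]
  linear_combination (norm := module) ha

theorem AddMonoidHom.map_sub_zsmul_neg (ha : a • B u u = B u x + B x u) :
    B (x - a • u) (-u) = B u x := by
  simp only [map_neg, map_sub, map_zsmul, AddMonoidHom.sub_apply, AddMonoidHom.zsmul_apply]
  linear_combination (norm := module) ha

theorem AddMonoidHom.map_sub_zsmul_self (ha : a • B u u = B u x + B x u) :
    B (x - a • u) (x - a • u) = B x x := by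
  simp only [map_sub, map_zsmul, AddMonoidHom.sub_apply, AddMonoidHom.zsmul_apply]
  linear_combination (norm := module) a • ha

theorem AddMonoidHom.map_sub_zsmul_add_swap (ha : a • B u u = B u x + B x u)
    (hb : b • B u u = B u y + B y u) :
    B (x - a • u) (y - b • u) + B (y - b • u) (x - a • u) = B x y + B y x := by
  simp only [map_sub, map_zsmul, AddMonoidHom.sub_apply, AddMonoidHom.zsmul_apply]
  linear_combination (norm := module) b • ha + a • hb

end Biadditive

def biadditiveOfBimultiplicative {M G : Type*} [AddCommGroup M] [CommGroup G] (χ : M → M → G)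
    (hχl : ∀ x y z, χ (x + y) z = χ x z * χ y z) (hχr : ∀ x y z, χ x (y + z) = χ x y * χ x z) :
    M →+ M →+ Additive G :=
  AddMonoidHom.mk' (fun x => AddMonoidHom.mk' (fun y => Additive.ofMul (χ x y)) (hχr x))
    fun x y => by ext z; exact hχl x y z

@[simp]
theorem biadditiveOfBimultiplicative_apply {M G : Type*} [AddCommGroup M] [CommGroup G]
    (χ : M → M → G) (hχl : ∀ x y z, χ (x + y) z = χ x z * χ y z)
    (hχr : ∀ x y z, χ x (y + z) = χ x y * χ x z) (x y : M) :
    biadditiveOfBimultiplicative χ hχl hχr x y = Additive.ofMul (χ x y) :=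
  rfl

/-- if vertex `i` is of Cartan type, i.e.
`χ(f i, f i)^(c l) = χ(f i, f l) χ(f l, f i)` for all `l ≠ i`, then the
reflection `s_i` (sending `f i ↦ -f i` and `f l ↦ f l - c l • f i` for `l ≠ i`)
transposes the braiding matrix at the `i`-th row/column and yields a
twist-equivalent matrix: same diagonal, same products `q_{lm} q_{ml}`. -/
theorem reflection_at_cartan_vertex_twist_equivalent {G : Type*} [CommGroup G] {θ : ℕ}
    (χ : (Fin θ → ℤ) → (Fin θ → ℤ) → G)
    (hχl : ∀ x y z, χ (x + y) z = χ x z * χ y z)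
    (hχr : ∀ x y z, χ x (y + z) = χ x y * χ x z)
    (f : Fin θ → (Fin θ → ℤ)) (i : Fin θ)
    (c : Fin θ → ℤ)
    (hc : ∀ l, l ≠ i → χ (f i) (f i) ^ (c l) = χ (f i) (f l) * χ (f l) (f i))
    (g : Fin θ → (Fin θ → ℤ))
    (hgi : g i = - f i) (hg : ∀ l, l ≠ i → g l = f l - c l • f i) :
    (χ (g i) (g i) = χ (f i) (f i)
      ∧ (∀ l, l ≠ i → χ (g i) (g l) = χ (f l) (f i))
      ∧ (∀ l, l ≠ i → χ (g l) (g i) = χ (f i) (f l)))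
    ∧ (∀ l, χ (g l) (g l) = χ (f l) (f l))
    ∧ (∀ l m, χ (g l) (g m) * χ (g m) (g l) = χ (f l) (f m) * χ (f m) (f l)) := by
  set B := biadditiveOfBimultiplicative χ hχl hχr
  set a := Function.update c i 2
  have hcartan : ∀ l, a l • B (f i) (f i) = B (f i) (f l) + B (f l) (f i) := by
    intro l
    rcases eq_or_ne l i with rfl | hl
    · simp [a, two_zsmul]
    · simpa [a, hl, B, ← ofMul_zpow] using congrArg Additive.ofMul (hc l hl)
  have hreflect : ∀ l, g l = f l - a l • f i := by
    intro l
    rcases eq_or_ne l i with rfl | hl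
    · rw [hgi, show a l = 2 from Function.update_self ..]
      module
    · rw [hg l hl, show a l = c l from Function.update_of_ne hl ..]
  refine ⟨⟨?_, fun l hl => ?_, fun l hl => ?_⟩, fun l => ?_, fun l m => ?_⟩
  · rw [hgi]
    exact congrArg Additive.toMul (by simp : B (-f i) (-f i) = B (f i) (f i))
  · rw [hgi, hreflect l]
    exact congrArg Additive.toMul (B.map_neg_sub_zsmul (hcartan l))
  · rw [hgi, hreflect l]
    exact congrArg Additive.toMul (B.map_sub_zsmul_neg (hcartan l))
  · rw [hreflect l]
    exact congrArg Additive.toMul (B.map_sub_zsmul_self (hcartan l))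
  · rw [hreflect l, hreflect m]
    exact congrArg Additive.toMul (B.map_sub_zsmul_add_swap (hcartan l) (hcartan m))
end

section
/- Fix θ ≥ 4 and let α₁,…,α_θ be the standard basis of ℤ^θ. Let Δ₊ := { u_{ij} : 1 ≤ i ≤ j ≤ θ, (i,j) ≠ (θ−1, θ) } ∪ { ũ_i := u_{i,θ−2} + α_θ : 1 ≤ i ≤ θ−2 } ∪ { z_{ij} := u_{iθ} + u_{j,θ−2} : 1 ≤ i < j ≤ θ−2 } (the set of positive roots of type D_θ for the trivial, purely even, parity function, which excludes α_{θ−1}+α_θ and all z̃_i) and Δ := Δ₊ ∪ (−Δ₊). Declare two indices i ≠ j adjacent if |i−j| = 1 and {i,j} ≠ {θ−1, θ}, or {i,j} = {θ−2, θ}. Define s_i ∈ Aut(ℤ^θ) by s_i(α_i) = −α_i, s_i(α_j) = α_j + α_i if i,j are adjacent, and s_i(α_j) = α_j otherwise. Then: (a) s_i(Δ) = Δ for every i; (b) max{ k ∈ ℕ₀ : α_j + kα_i ∈ Δ } = 1 if i,j are adjacent and 0 otherwise (so the Cartan matrix recovered from Δ via a_{ij} := −max{ k : α_j + kα_i ∈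 Δ } is of type D_θ). -/
/-!
In the orthonormal coordinates `ε` of type `D_θ` (`α k = ε k − ε (k+1)` for `k < θ` and
`α θ = ε (θ−1) + ε θ`) the listed positive roots are exactly the vectors `ε a ± ε b` with
`a < b`. Since the integer vectors of squared length `2` are the `±ε a ± ε b` and `ε` is
injective, `Δ` is the set of `x` with `|ε x|² = 2`. The Gram matrix of the `α i` is the Cartan
matrix, so `s i x = x − ⟨x, α i⟩ α i` is the orthogonal reflection in `α i`: an involution
preserving length, which gives (a). For (b), `|α j + m α i|² = 2 + 2m(m + a_{ij})`, which is `2`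
only for `m = 0` and `m = −a_{ij}`.
-/

namespace SuperRootSystemD

variable (n : ℕ)

/-- The standard basis vector `α i` of `ℤ^θ`, `θ = n+4 ≥ 4`. -/
def alpha (i : Fin (n + 4)) : Fin (n + 4) → ℤ := Pi.single i 1

/-- `u i j = α i + α (i+1) + ⋯ + α j` (for `i ≤ j`). -/
def u (i j : Fin (n + 4)) : Fin (n + 4) → ℤ := fun l => if i ≤ l ∧ l ≤ j then 1 else 0

/-- The last index (paper index `θ`). -/
abbrev last : Fin (n + 4) := Fin.last (n + 3)

/-- Paper index `θ − 1`. -/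
abbrev pre : Fin (n + 4) := ⟨n + 2, by omega⟩

/-- Paper index `θ − 2`. -/
abbrev pre2 : Fin (n + 4) := ⟨n + 1, by omega⟩

/-- The positive roots of type `D_θ` with the trivial (purely even) parity:
`{ u i j : i ≤ j, (i,j) ≠ (θ−1,θ) } ∪ { ũ i = u i (θ−2) + α θ : i ≤ θ−2 }
∪ { z i j = u i θ + u j (θ−2) : i < j ≤ θ−2 }`. -/
def posRoots : Set (Fin (n + 4) → ℤ) :=
  { x | ∃ i j : Fin (n + 4), i ≤ j ∧ ¬(i = pre n ∧ j = last n) ∧ x = u n i j }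
    ∪ { x | ∃ i : Fin (n + 4), i ≤ pre2 n ∧ x = u n i (pre2 n) + alpha n (last n) }
    ∪ { x | ∃ i j : Fin (n + 4), i < j ∧ j ≤ pre2 n ∧ x = u n i (last n) + u n j (pre2 n) }

/-- The set of roots `Δ = Δ₊ ∪ (−Δ₊)`. -/
def roots : Set (Fin (n + 4) → ℤ) := posRoots n ∪ (Neg.neg '' posRoots n)

/-- Adjacency in the Dynkin diagram of type `D_θ`: `|i − j| = 1` except for the
pair `{θ−1, θ}`, together with the pair `{θ−2, θ}`. -/
abbrev adjacent (i j : Fin (n + 4)) : Prop :=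
  (((i : ℤ) - (j : ℤ)).natAbs = 1 ∧ ¬((i = pre n ∧ j = last n) ∨ (i = last n ∧ j = pre n)))
    ∨ ((i = pre2 n ∧ j = last n) ∨ (i = last n ∧ j = pre2 n))

/-- `−a_{ij}` for the Cartan matrix of type `D_θ`. -/
def coeff (i j : Fin (n + 4)) : ℤ :=
  if j = i then -2 else if adjacent n i j then 1 else 0

/-- The reflection `s_i`, determined by `s_i (α j) = α j − a_{ij} α i`. -/
def refl (i : Fin (n + 4)) (v : Fin (n + 4) → ℤ) : Fin (n + 4) → ℤ :=
  v + (∑ j, coeff n i j * v j) • alpha n i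

theorem int_sq_eq_one_of_pos_of_lt_four {z : ℤ} (h0 : 0 < z ^ 2) (h4 : z ^ 2 < 4) :
    z ^ 2 = 1 := by
  have hlt : z < 2 := by nlinarith
  have hgt : -2 < z := by nlinarith
  interval_cases z <;> simp_all

theorem exists_sq_eq_one_of_sum_sq {ι : Type*} [DecidableEq ι] {s : Finset ι} {f : ι → ℤ}
    {c : ℤ} (h : ∑ k ∈ s, f k ^ 2 = c) (hc0 : 0 < c) (hc4 : c < 4) :
    ∃ a ∈ s, f a ^ 2 = 1 ∧ ∑ k ∈ s.erase a, f k ^ 2 = c - 1 := by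
  obtain ⟨a, ha, hfa⟩ := Finset.exists_ne_zero_of_sum_ne_zero (h ▸ hc0.ne')
  have hle : f a ^ 2 ≤ c := h ▸ Finset.single_le_sum (fun k _ => sq_nonneg (f k)) ha
  have hsq : f a ^ 2 = 1 :=
    int_sq_eq_one_of_pos_of_lt_four (lt_of_le_of_ne (sq_nonneg _) (Ne.symm hfa)) (by omega)
  refine ⟨a, ha, hsq, ?_⟩
  have := Finset.add_sum_erase s (fun k => f k ^ 2) ha
  omega

theorem eq_single_add_single_of_sum_sq_eq_two {ι : Type*} [DecidableEq ι] {s : Finset ι}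
    {f : ι → ℤ} (hf : ∀ k ∉ s, f k = 0) (h : ∑ k ∈ s, f k ^ 2 = 2) :
    ∃ a ∈ s, ∃ b ∈ s, ∃ σ τ : ℤ, a ≠ b ∧ (σ = 1 ∨ σ = -1) ∧ (τ = 1 ∨ τ = -1) ∧
      f = Pi.single a σ + Pi.single b τ := by
  obtain ⟨a, ha, hfa, hrest⟩ := exists_sq_eq_one_of_sum_sq h (by norm_num) (by norm_num)
  obtain ⟨b, hb, hfb, hrest'⟩ := exists_sq_eq_one_of_sum_sq hrest (by norm_num) (by norm_num)
  have hzero : ∀ k ∈ (s.erase a).erase b, f k = 0 := fun k hk =>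
    pow_eq_zero_iff two_ne_zero |>.mp <|
      (Finset.sum_eq_zero_iff_of_nonneg fun k _ => sq_nonneg (f k)).mp (by simpa using hrest') k hk
  obtain ⟨hba, hbs⟩ := Finset.mem_erase.mp hb
  refine ⟨a, ha, b, hbs, f a, f b, hba.symm, sq_eq_one_iff.mp hfa, sq_eq_one_iff.mp hfb,
    funext fun k => ?_⟩
  by_cases hka : k = a
  · subst hka; simp [hba]
  by_cases hkb : k = b
  · subst hkb; simp [hba]
  have hk : f k = 0 := by
    by_cases hks : k ∈ s
    · exact hzero k (by simp [hka, hkb, hks])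
    · exact hf k hks
  simp [hka, hkb, hk]

theorem sum_mul_single_add_single {ι : Type*} [DecidableEq ι] {s : Finset ι} {a b : ι}
    (ha : a ∈ s) (hb : b ∈ s) (f : ι → ℤ) (σ τ : ℤ) :
    ∑ k ∈ s, f k * (Pi.single a σ + Pi.single b τ : ι → ℤ) k = f a * σ + f b * τ := by
  simp [mul_add, Finset.sum_add_distrib, Pi.single_apply, ha, hb]

theorem isGreatest_of_mem_iff {S : Set ℕ} {c : ℕ}
    (h : ∀ m, m ∈ S ↔ (m : ℤ) * (m - c) = 0) :
    IsGreatest S c := by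
  refine ⟨(h c).2 (by ring), fun m hm => ?_⟩
  rcases mul_eq_zero.mp ((h m).1 hm) with hm | hm <;> omega

def coord (x : Fin (n + 4) → ℤ) (k : ℕ) : ℤ := if h : k < n + 4 then x ⟨k, h⟩ else 0

/-- Coordinates with respect to the orthonormal basis `ε`, indexed from `0` like `Fin (n + 4)`;
they vanish from `n + 4` on. -/
def eps : (Fin (n + 4) → ℤ) →ₗ[ℤ] ℕ → ℤ where
  toFun x k :=
    if k ≤ n + 1 then coord n x k - (if k = 0 then 0 else coord n x (k - 1))
    else if k = n + 2 then coord n x (n + 2) + coord n x (n + 3) - coord n x (n + 1)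
    else if k = n + 3 then coord n x (n + 3) - coord n x (n + 2)
    else 0
  map_add' x y := by
    funext k
    simp only [coord, Pi.add_apply]
    split_ifs <;> ring
  map_smul' c x := by
    funext k
    simp only [coord, Pi.smul_apply, smul_eq_mul, RingHom.id_apply]
    split_ifs <;> ring

theorem eps_apply_of_le (x : Fin (n + 4) → ℤ) {k : ℕ} (hk : n + 4 ≤ k) : eps n x k = 0 := by
  simp only [eps, LinearMap.coe_mk, AddHom.coe_mk]
  split_ifs <;> omega

theorem coord_eq_zero_of_eps_eq_zero {x : Fin (n + 4) → ℤ} (hx : eps n x = 0) :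
    ∀ k ≤ n + 1, coord n x k = 0 := by
  intro k
  induction k with
  | zero =>
    intro _
    simpa [eps] using congrFun hx 0
  | succ k ih =>
    intro hk
    have := congrFun hx (k + 1)
    simp only [eps, LinearMap.coe_mk, AddHom.coe_mk, Pi.zero_apply] at this
    rw [if_pos hk, if_neg (by omega), Nat.add_sub_cancel, ih (by omega)] at this
    omega

theorem eps_injective : Function.Injective (eps n) := by
  refine (injective_iff_map_eq_zero (eps n)).mpr fun x hx => ?_
  have hlow := coord_eq_zero_of_eps_eq_zero n hx
  have htop : coord n x (n + 2) = 0 ∧ coord n x (n + 3) = 0 := by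
    have h1 := hlow (n + 1) le_rfl
    have h2 := congrFun hx (n + 2)
    have h3 := congrFun hx (n + 3)
    simp only [eps, LinearMap.coe_mk, AddHom.coe_mk, Pi.zero_apply] at h2 h3
    split_ifs at h2 h3 <;> omega
  funext l
  have hl : coord n x l = 0 := by
    rcases Nat.lt_or_ge l (n + 2) with hl | hl
    · exact hlow l (by omega)
    · obtain h | h : (l : ℕ) = n + 2 ∨ (l : ℕ) = n + 3 := by omega
      · exact h ▸ htop.1
      · exact h ▸ htop.2
  simpa [coord] using hl

theorem eps_u {i j : Fin (n + 4)} (hij : i ≤ j) (hj : (j : ℕ) ≤ n + 2) :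
    eps n (u n i j) = Pi.single (i : ℕ) 1 + Pi.single ((j : ℕ) + 1) (-1) := by
  rw [Fin.le_def] at hij
  funext k
  simp only [eps, LinearMap.coe_mk, AddHom.coe_mk, coord, u, Pi.add_apply, Pi.single_apply,
    Fin.le_def]
  split_ifs <;> omega

theorem eps_u_last {i : Fin (n + 4)} (hi : (i : ℕ) ≤ n + 1) :
    eps n (u n i (last n)) = Pi.single (i : ℕ) 1 + Pi.single (n + 2) 1 := by
  funext k
  simp only [eps, LinearMap.coe_mk, AddHom.coe_mk, coord, u, Pi.add_apply, Pi.single_apply,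
    Fin.le_def, Fin.val_last]
  split_ifs <;> omega

theorem eps_alpha_last : eps n (alpha n (last n)) = Pi.single (n + 2) 1 + Pi.single (n + 3) 1 := by
  funext k
  simp only [eps, LinearMap.coe_mk, AddHom.coe_mk, coord, alpha, Pi.add_apply, Pi.single_apply,
    Fin.ext_iff, Fin.val_last]
  split_ifs <;> omega

theorem alpha_eq_u (i : Fin (n + 4)) : alpha n i = u n i i := by
  funext l
  simp only [alpha, u, Pi.single_apply, Fin.le_def, Fin.ext_iff]
  split_ifs <;> omega

theorem eps_alpha_of_lt {i : Fin (n + 4)} (hi : (i : ℕ) < n + 3) :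
    eps n (alpha n i) = Pi.single (i : ℕ) 1 + Pi.single ((i : ℕ) + 1) (-1) := by
  rw [alpha_eq_u]
  exact eps_u n le_rfl (by omega)

theorem eps_uTilde {i : Fin (n + 4)} (hi : (i : ℕ) ≤ n + 1) :
    eps n (u n i (pre2 n) + alpha n (last n)) = Pi.single (i : ℕ) 1 + Pi.single (n + 3) 1 := by
  funext k
  simp only [map_add, eps, LinearMap.coe_mk, AddHom.coe_mk, coord, u, alpha, Pi.add_apply,
    Pi.single_apply, Fin.le_def, Fin.ext_iff, Fin.val_last]
  split_ifs <;> omega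

theorem eps_z {i j : Fin (n + 4)} (hij : i < j) (hj : (j : ℕ) ≤ n + 1) :
    eps n (u n i (last n) + u n j (pre2 n)) = Pi.single (i : ℕ) 1 + Pi.single (j : ℕ) 1 := by
  rw [Fin.lt_def] at hij
  funext k
  simp only [map_add, eps, LinearMap.coe_mk, AddHom.coe_mk, coord, u, Pi.add_apply,
    Pi.single_apply, Fin.le_def, Fin.val_last]
  split_ifs <;> omega

/-- The positive roots `ε a ± ε b` (`a < b < N`) of the root system `D_N`. -/
def epsPosRoots (N : ℕ) : Set (ℕ → ℤ) :=
  {v | ∃ a b : ℕ, ∃ t : ℤ,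
    a < b ∧ b < N ∧ (t = 1 ∨ t = -1) ∧ v = Pi.single a 1 + Pi.single b t}

theorem eps_mem_epsPosRoots {x : Fin (n + 4) → ℤ} (hx : x ∈ posRoots n) :
    eps n x ∈ epsPosRoots (n + 4) := by
  rcases hx with (⟨i, j, hij, hpre, rfl⟩ | ⟨i, hi, rfl⟩) | ⟨i, j, hij, hj, rfl⟩
  · have hij' : (i : ℕ) ≤ j := hij
    rcases Nat.lt_or_ge (j : ℕ) (n + 3) with hj | hj
    · exact ⟨i, j + 1, -1, by omega, by omega, by simp, eps_u n hij (by omega)⟩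
    obtain rfl : j = last n := Fin.ext (by simp; omega)
    rcases Nat.lt_or_ge (i : ℕ) (n + 2) with hi | hi
    · exact ⟨i, n + 2, 1, hi, by omega, by simp, eps_u_last n (by omega)⟩
    have hi' : (i : ℕ) ≠ n + 2 := fun h => hpre ⟨Fin.ext h, rfl⟩
    obtain rfl : i = last n := Fin.ext (by simp; omega)
    refine ⟨n + 2, n + 3, 1, by omega, by omega, by simp, ?_⟩
    rw [← alpha_eq_u]
    exact eps_alpha_last n
  · have hi' : (i : ℕ) ≤ n + 1 := hi
    exact ⟨i, n + 3, 1, by omega, by omega, by simp, eps_uTilde n hi'⟩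
  · have hj' : (j : ℕ) ≤ n + 1 := hj
    exact ⟨i, j, 1, hij, by omega, by simp, eps_z n hij hj'⟩

theorem exists_mem_posRoots_eps_eq {v : ℕ → ℤ} (hv : v ∈ epsPosRoots (n + 4)) :
    ∃ x ∈ posRoots n, eps n x = v := by
  obtain ⟨a, b, t, hab, hb, ht | ht, rfl⟩ := hv <;> subst ht
  · rcases Nat.lt_or_ge b (n + 2) with hb2 | hb2
    · have hlt : (⟨a, by omega⟩ : Fin (n + 4)) < ⟨b, hb⟩ := Fin.mk_lt_mk.mpr hab
      exact ⟨_, Or.inr ⟨_, _, hlt, Fin.mk_le_mk.mpr (by omega), rfl⟩,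
        eps_z n hlt (by simp; omega)⟩
    obtain rfl | rfl : b = n + 2 ∨ b = n + 3 := by omega
    · refine ⟨_, Or.inl (Or.inl ⟨⟨a, by omega⟩, last n, Fin.mk_le_mk.mpr (by omega),
        fun h => ?_, rfl⟩), eps_u_last n (by simp; omega)⟩
      simp [Fin.ext_iff] at h
      omega
    rcases Nat.lt_or_ge a (n + 2) with ha | ha
    · exact ⟨_, Or.inl (Or.inr ⟨⟨a, by omega⟩, Fin.mk_le_mk.mpr (by omega), rfl⟩),
        eps_uTilde n (by simp; omega)⟩
    obtain rfl : a = n + 2 := by omega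
    refine ⟨_, Or.inl (Or.inl ⟨last n, last n, le_rfl, fun h => ?_, rfl⟩), ?_⟩
    · simp [Fin.ext_iff] at h
    · rw [← alpha_eq_u]
      exact eps_alpha_last n
  · obtain ⟨b, rfl⟩ : ∃ c, b = c + 1 := ⟨b - 1, by omega⟩
    have hle : (⟨a, by omega⟩ : Fin (n + 4)) ≤ ⟨b, by omega⟩ :=
      Fin.mk_le_mk.mpr (by omega)
    refine ⟨_, Or.inl (Or.inl ⟨_, _, hle, fun h => ?_, rfl⟩), eps_u n hle (by simp; omega)⟩
    simp [Fin.ext_iff] at h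
    omega

theorem mem_roots_iff_eps {x : Fin (n + 4) → ℤ} :
    x ∈ roots n ↔ eps n x ∈ epsPosRoots (n + 4) ∨ -eps n x ∈ epsPosRoots (n + 4) := by
  have hpos : ∀ y, y ∈ posRoots n ↔ eps n y ∈ epsPosRoots (n + 4) := fun y =>
    ⟨eps_mem_epsPosRoots n, fun hy => by
      obtain ⟨r, hr, he⟩ := exists_mem_posRoots_eps_eq n hy
      exact eps_injective n he ▸ hr⟩
  rw [roots, Set.mem_union, Set.image_neg_eq_neg, Set.mem_neg, hpos, hpos, map_neg]

theorem sum_sq_eq_two_iff {N : ℕ} {v : ℕ → ℤ} (hv : ∀ k, N ≤ k → v k = 0) :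
    ∑ k ∈ Finset.range N, v k ^ 2 = 2 ↔ v ∈ epsPosRoots N ∨ -v ∈ epsPosRoots N := by
  have hpos : ∀ w ∈ epsPosRoots N, ∑ k ∈ Finset.range N, w k ^ 2 = 2 := by
    rintro _ ⟨a, b, t, hab, hb, ht, rfl⟩
    simp only [sq]
    rw [sum_mul_single_add_single (by simp; omega) (by simpa using hb)]
    rcases ht with rfl | rfl <;> simp [hab.ne, hab.ne']
  constructor
  · intro h
    obtain ⟨a, ha, b, hb, σ, τ, hab, hσ, hτ, hv'⟩ :=
      eq_single_add_single_of_sum_sq_eq_two (fun k hk => hv k (by simpa using hk)) h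
    rw [Finset.mem_range] at ha hb
    wlog hab' : a < b generalizing a b σ τ
    · exact this b hb a ha τ σ hab.symm hτ hσ (by rw [hv', add_comm]) (by omega)
    rcases hσ with rfl | rfl
    · exact Or.inl ⟨a, b, τ, hab', hb, hτ, hv'⟩
    · refine Or.inr ⟨a, b, -τ, hab', hb, by rcases hτ with rfl | rfl <;> simp, ?_⟩
      rw [hv', neg_add, Pi.single_neg, Pi.single_neg, neg_neg]
  · rintro (h | h)
    · exact hpos v h
    · simpa using hpos _ h

def pairing (x y : Fin (n + 4) → ℤ) : ℤ :=
  ∑ k ∈ Finset.range (n + 4), eps n x k * eps n y k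

theorem mem_roots_iff_pairing_self {x : Fin (n + 4) → ℤ} :
    x ∈ roots n ↔ pairing n x x = 2 := by
  rw [mem_roots_iff_eps, pairing, ← sum_sq_eq_two_iff fun k hk => eps_apply_of_le n x hk]
  simp only [sq]

theorem pairing_comm (x y : Fin (n + 4) → ℤ) : pairing n x y = pairing n y x := by
  simp only [pairing, mul_comm]

theorem pairing_add_smul_left (x y z : Fin (n + 4) → ℤ) (c : ℤ) :
    pairing n (x + c • y) z = pairing n x z + c * pairing n y z := by
  simp only [pairing, map_add, map_smul, Pi.add_apply, Pi.smul_apply, smul_eq_mul, add_mul,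
    Finset.sum_add_distrib, Finset.mul_sum, mul_assoc]

theorem coeff_eq (i j : Fin (n + 4)) : coeff n i j =
    if (j : ℕ) = i then -2
    else if (((i : ℕ) = j + 1 ∨ (j : ℕ) = i + 1) ∧ (i : ℕ) + j ≠ 2 * n + 5)
        ∨ ((i : ℕ) = n + 1 ∧ (j : ℕ) = n + 3) ∨ ((i : ℕ) = n + 3 ∧ (j : ℕ) = n + 1)
      then 1 else 0 := by
  have := i.isLt
  have := j.isLt
  simp only [coeff, adjacent, Fin.ext_iff, Fin.val_last]
  split_ifs <;> omega

theorem coeff_self (i : Fin (n + 4)) : coeff n i i = -2 := if_pos rfl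

theorem eq_last_or_lt (i : Fin (n + 4)) : i = last n ∨ (i : ℕ) < n + 3 := by
  rcases Nat.lt_or_ge (i : ℕ) (n + 3) with hi | hi
  · exact Or.inr hi
  · exact Or.inl (Fin.ext (by simp; omega))

theorem pairing_alpha_of_lt {i : Fin (n + 4)} (hi : (i : ℕ) < n + 3) (x : Fin (n + 4) → ℤ) :
    pairing n x (alpha n i) = eps n x i - eps n x (i + 1) := by
  rw [pairing, eps_alpha_of_lt n hi, sum_mul_single_add_single (by simp) (by simp; omega)]
  ring

theorem pairing_alpha_last (x : Fin (n + 4) → ℤ) :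
    pairing n x (alpha n (last n)) = eps n x (n + 2) + eps n x (n + 3) := by
  rw [pairing, eps_alpha_last, sum_mul_single_add_single (by simp) (by simp)]
  ring

theorem pairing_alpha_alpha (i j : Fin (n + 4)) :
    pairing n (alpha n j) (alpha n i) = -coeff n i j := by
  rcases eq_last_or_lt n i with rfl | hi <;> rcases eq_last_or_lt n j with rfl | hj
  · simp only [pairing_alpha_last, eps_alpha_last, Pi.add_apply, Pi.single_apply, coeff_self]
    norm_num
  · simp only [pairing_alpha_last, eps_alpha_of_lt n hj, Pi.add_apply, Pi.single_apply, coeff_eq,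
      Fin.val_last, true_and]
    split_ifs <;> omega
  · simp only [pairing_alpha_of_lt n hi, eps_alpha_last, Pi.add_apply, Pi.single_apply, coeff_eq,
      Fin.val_last, and_true]
    split_ifs <;> omega
  · simp only [pairing_alpha_of_lt n hi, eps_alpha_of_lt n hj, Pi.add_apply, Pi.single_apply,
      coeff_eq]
    split_ifs <;> omega

theorem pairing_eq_sum (x y : Fin (n + 4) → ℤ) :
    pairing n x y = ∑ j, x j * pairing n (alpha n j) y := by
  conv_lhs => rw [pi_eq_sum_univ' x]
  simp only [pairing, map_sum, map_smul, Finset.sum_apply, Pi.smul_apply, smul_eq_mul,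
    Finset.sum_mul, Finset.mul_sum, mul_assoc, alpha]
  exact Finset.sum_comm

theorem sum_coeff_mul (i : Fin (n + 4)) (x : Fin (n + 4) → ℤ) :
    ∑ j, coeff n i j * x j = -pairing n x (alpha n i) := by
  rw [pairing_eq_sum]
  simp only [pairing_alpha_alpha, Finset.sum_neg_distrib, mul_neg, neg_neg, mul_comm]

theorem refl_eq (i : Fin (n + 4)) (x : Fin (n + 4) → ℤ) :
    refl n i x = x - pairing n x (alpha n i) • alpha n i := by
  rw [refl, sum_coeff_mul, neg_smul, ← sub_eq_add_neg]

theorem pairing_alpha_self (i : Fin (n + 4)) : pairing n (alpha n i) (alpha n i) = 2 := by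
  rw [pairing_alpha_alpha, coeff_self, neg_neg]

theorem pairing_sub_smul_left (x y z : Fin (n + 4) → ℤ) (c : ℤ) :
    pairing n (x - c • y) z = pairing n x z - c * pairing n y z := by
  rw [sub_eq_add_neg, ← neg_smul, pairing_add_smul_left, neg_mul, ← sub_eq_add_neg]

theorem pairing_refl_self (i : Fin (n + 4)) (x : Fin (n + 4) → ℤ) :
    pairing n (refl n i x) (refl n i x) = pairing n x x := by
  rw [refl_eq, pairing_sub_smul_left, pairing_comm n x, pairing_comm n (alpha n i),
    pairing_sub_smul_left, pairing_sub_smul_left, pairing_alpha_self, pairing_comm n (alpha n i) x]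
  ring

theorem refl_refl (i : Fin (n + 4)) (x : Fin (n + 4) → ℤ) : refl n i (refl n i x) = x := by
  rw [refl_eq n i (refl n i x), refl_eq n i x, pairing_sub_smul_left, pairing_alpha_self]
  module

theorem refl_mem_roots (i : Fin (n + 4)) {x : Fin (n + 4) → ℤ} (hx : x ∈ roots n) :
    refl n i x ∈ roots n := by
  rw [mem_roots_iff_pairing_self] at hx ⊢
  rwa [pairing_refl_self]

theorem alpha_add_smul_mem_roots_iff (i j : Fin (n + 4)) (m : ℤ) :
    alpha n j + m • alpha n i ∈ roots n ↔ m * (m - coeff n i j) = 0 := by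
  rw [mem_roots_iff_pairing_self, pairing_add_smul_left, pairing_comm n (alpha n i),
    pairing_comm n (alpha n j), pairing_add_smul_left, pairing_add_smul_left,
    pairing_alpha_self, pairing_alpha_self, pairing_comm n (alpha n i), pairing_alpha_alpha]
  constructor <;> intro h <;> linarith

/-- in the super root system of type `D_θ` (`θ = n+4 ≥ 4`) with
the trivial parity function:
(a) every reflection `s_i` preserves the set of roots;
(b) the string lengths `max{ k : α j + k α i ∈ Δ }` are `1` for adjacent pairs
and `0` otherwise, so the recovered generalized Cartan matrix is of type `D_θ`. -/
theorem super_type_D_root_system :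
    (∀ i : Fin (n + 4), refl n i '' roots n = roots n)
    ∧ (∀ i j : Fin (n + 4), i ≠ j →
        IsGreatest {m : ℕ | alpha n j + (m : ℤ) • alpha n i ∈ roots n}
          (if adjacent n i j then 1 else 0)) := by
  refine ⟨fun i => ?_, fun i j hij => ?_⟩
  · refine Set.Subset.antisymm (Set.image_subset_iff.mpr fun x => refl_mem_roots n i)
      fun y hy => ⟨refl n i y, refl_mem_roots n i hy, refl_refl n i y⟩
  · have hcoeff : coeff n i j = ((if adjacent n i j then 1 else 0 : ℕ) : ℤ) := by
      rw [coeff, if_neg hij.symm]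
      split_ifs <;> rfl
    refine isGreatest_of_mem_iff fun m => ?_
    rw [Set.mem_ofPred_eq, alpha_add_smul_mem_roots_iff, hcoeff]

end SuperRootSystemD
end
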